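/- For every odd prime p, with d = p³+1, one has ∑_{o ∈ O_{d,p}} |o|·(3 − ht(o)) = (p−1)³/2. -/

import Mathlib

open scoped Classical

/-- The orbit of `i ∈ ℤ/dℤ` under multiplication by `p` (as a finite set). -/
noncomputable def orb (p d : ℕ) [NeZero d] (i : ZMod d) : Finset (ZMod d) :=
  Finset.image (fun j : ℕ => (p : ZMod d) ^ j * i) (Finset.range d)

/-- The set `O_{d,p}` of orbits of `⟨p⟩` on `ℤ/dℤ` other than `{0}` and `{d/2}`. -/
noncomputable def Odp (p d : ℕ) [NeZero d] : Finset (Finset (ZMod d)) :=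
  Finset.image (orb p d) (Finset.univ.filter fun x : ZMod d => x ≠ 0 ∧ x + x ≠ 0)

/-- The sequence `a_0, a_1, …` attached to the word of the orbit of `i` at the base
point `i`: `a_0 = 0` and `a_(j+1) = a_j ± 1` according as `−p^j·i ∈ B` or `−p^j·i ∈ A`. -/
def aseq (p d : ℕ) [NeZero d] (i : ZMod d) : ℕ → ℤ
  | 0 => 0
  | j + 1 => aseq p d i j +
      (if (d : ℕ) < 2 * (-((p : ZMod d) ^ j * i)).val then 1 else -1)

/-- The height of the word of the orbit of `i` read from the base point `i`:
`max_{0 ≤ j ≤ m} a_j − min_{0 ≤ j ≤ m} a_j`, where `m` is the orbit size. -/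
noncomputable def htElt (p d : ℕ) [NeZero d] (i : ZMod d) : ℕ :=
  ((Finset.range ((orb p d i).card + 1)).sup' Finset.nonempty_range_add_one (aseq p d i)
    - (Finset.range ((orb p d i).card + 1)).inf' Finset.nonempty_range_add_one
        (aseq p d i)).toNat

/-- The height `ht(o)` of an orbit `o` (independent of the chosen base point). -/
noncomputable def htOrbit (p d : ℕ) [NeZero d] (o : Finset (ZMod d)) : ℕ :=
  o.sup (htElt p d)

/-!
Since `p³ = -1` in `ℤ/dℤ`, multiplication by `p` has order dividing 6 and `p³` acts as
negation, which swaps the halves `A` and `B`. Hence the word of the orbit of `i` is determined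
by the halves containing `i, p i, p² i`: with `s` the corresponding ±1 steps it reads
`s₀ s₁ s₂ (-s₀) (-s₁) (-s₂)` (or `s₀ (-s₀)` on an orbit `{i, -i}`), and its height is 1 if
`s₀ s₁ s₂` alternates and 3 otherwise. So the sum is twice the number of `i` whose pattern
`s₀ s₁ s₂` alternates.

Multiplication by `p` rotates patterns by `(a, b, c) ↦ (b, c, ¬a)`, a permutation of the eight
patterns with one 6-cycle (the non-alternating ones) and one 2-cycle, so the pattern classes have
only two sizes `N` and `M`, with `6N + 2M = d - 2 = p³ - 1`. Finally `2N` counts the `x ∈ A`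
with `p x ∈ A`: writing `x = k p² + r` gives `p x = p r - k`, and these `x` are exactly those
with `k ≤ (p - 1)/2` and `1 ≤ r ≤ (p² - 1)/2`. Hence `2N = (p + 1)(p² - 1)/4` and the sum is
`4M = (p - 1)³/2`.
-/

open Finset

namespace ZMod

variable {d : ℕ} [NeZero d]

def upperHalf (x : ZMod d) : Bool := decide (d < 2 * x.val)

def nonTwoTorsion (d : ℕ) [NeZero d] : Finset (ZMod d) := {x | x + x ≠ 0}

@[simp]
lemma mem_nonTwoTorsion {x : ZMod d} : x ∈ nonTwoTorsion d ↔ x + x ≠ 0 := by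
  simp [nonTwoTorsion]

lemma add_self_eq_zero_iff_val (x : ZMod d) : x + x = 0 ↔ x.val = 0 ∨ 2 * x.val = d := by
  have hcast : x + x = ((2 * x.val : ℕ) : ZMod d) := by
    push_cast [ZMod.natCast_val, ZMod.cast_id]
    ring
  rw [hcast, ZMod.natCast_eq_zero_iff]
  have := x.val_lt
  constructor
  · rintro ⟨c, hc⟩
    obtain _ | _ | c := c <;> [omega; omega; nlinarith]
  · rintro (h | h)
    · simp [h]
    · exact ⟨1, by omega⟩

lemma upperHalf_neg {x : ZMod d} (hx : x + x ≠ 0) : upperHalf (-x) = !upperHalf x := by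
  rw [Ne, add_self_eq_zero_iff_val, not_or] at hx
  have hneg : (-x).val = d - x.val := by
    rw [ZMod.neg_val, if_neg (by rw [← ZMod.val_eq_zero]; exact hx.1)]
  have := x.val_lt
  simp only [upperHalf, hneg]
  by_cases h : d < 2 * x.val <;> simp [h] <;> omega

lemma add_self_ne_zero_and_upperHalf_eq_false_iff {x : ZMod d} :
    (x + x ≠ 0 ∧ upperHalf x = false) ↔ (0 < x.val ∧ 2 * x.val < d) := by
  rw [Ne, add_self_eq_zero_iff_val, upperHalf, decide_eq_false_iff_not]
  omega

lemma val_natCast_half : ((d / 2 : ℕ) : ZMod d).val = d / 2 :=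
  ZMod.val_cast_of_lt (Nat.div_lt_self (NeZero.pos d) one_lt_two)

lemma add_self_eq_zero_iff_of_even (hd : Even d) {x : ZMod d} :
    x + x = 0 ↔ x = 0 ∨ x = ((d / 2 : ℕ) : ZMod d) := by
  rw [add_self_eq_zero_iff_val, ← ZMod.val_eq_zero, ← (ZMod.val_injective d).eq_iff,
    val_natCast_half]
  obtain ⟨m, rfl⟩ := hd
  omega

lemma card_nonTwoTorsion (hd : Even d) : #(nonTwoTorsion d) = d - 2 := by
  have hne : (0 : ZMod d) ≠ ((d / 2 : ℕ) : ZMod d) := by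
    rw [← (ZMod.val_injective d).ne_iff, ZMod.val_zero, val_natCast_half]
    obtain ⟨m, rfl⟩ := hd
    have := NeZero.pos (m + m)
    omega
  have h : nonTwoTorsion d = univ \ {0, ((d / 2 : ℕ) : ZMod d)} := by
    ext x
    simp [add_self_eq_zero_iff_of_even hd]
  rw [h, card_sdiff_of_subset (subset_univ _), card_univ, ZMod.card, card_pair hne]

end ZMod

open ZMod

section Orbit

variable {d p : ℕ} [NeZero d]

lemma mem_orb_self (i : ZMod d) : i ∈ orb p d i :=
  mem_image.mpr ⟨0, mem_range.mpr (NeZero.pos d), by simp⟩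

lemma mem_orb_iff (hp : IsOfFinOrder (p : ZMod d)) {i x : ZMod d} :
    x ∈ orb p d i ↔ ∃ k, x = (p : ZMod d) ^ k * i := by
  simp only [orb, mem_image, mem_range]
  refine ⟨fun ⟨k, _, hk⟩ => ⟨k, hk.symm⟩, fun ⟨k, hk⟩ => ⟨k % orderOf (p : ZMod d), ?_, ?_⟩⟩
  · calc k % orderOf (p : ZMod d) < orderOf (p : ZMod d) := Nat.mod_lt _ hp.orderOf_pos
      _ ≤ d := orderOf_le_card_univ.trans_eq (ZMod.card d)
  · rw [pow_mod_orderOf, hk]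

lemma orb_eq_of_mem (hp : IsOfFinOrder (p : ZMod d)) {i x : ZMod d} (hx : x ∈ orb p d i) :
    orb p d x = orb p d i := by
  obtain ⟨k, rfl⟩ := (mem_orb_iff hp).mp hx
  have hinv : (p : ZMod d) ^ (k * (orderOf (p : ZMod d) - 1)) * (p : ZMod d) ^ k = 1 := by
    rw [← pow_add, ← mul_add_one, Nat.sub_one_add_one hp.orderOf_pos.ne', mul_comm k, pow_mul,
      pow_orderOf_eq_one, one_pow]
  ext y
  simp only [mem_orb_iff hp]
  constructor
  · rintro ⟨m, rfl⟩
    exact ⟨m + k, by rw [pow_add, mul_assoc]⟩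
  · rintro ⟨m, rfl⟩
    exact ⟨m + k * (orderOf (p : ZMod d) - 1), by
      rw [pow_add, mul_assoc, ← mul_assoc _ _ i, hinv, one_mul]⟩

end Orbit

lemma pow_six_eq_one_of_pow_three {M : Type*} [Monoid M] [HasDistribNeg M] {a : M}
    (h : a ^ 3 = -1) : a ^ 6 = 1 := by
  rw [show 6 = 3 * 2 from rfl, pow_mul, h, neg_one_sq]

section CubeRootOfMinusOne

variable {d p : ℕ}

lemma isUnit_of_pow_three (hp3 : (p : ZMod d) ^ 3 = -1) : IsUnit (p : ZMod d) :=
  IsUnit.of_pow_eq_one (pow_six_eq_one_of_pow_three hp3) (by norm_num)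

lemma isOfFinOrder_of_pow_three (hp3 : (p : ZMod d) ^ 3 = -1) : IsOfFinOrder (p : ZMod d) :=
  isOfFinOrder_iff_pow_eq_one.mpr ⟨6, by norm_num, pow_six_eq_one_of_pow_three hp3⟩

lemma pow_mul_add_self_ne_zero (hp3 : (p : ZMod d) ^ 3 = -1) {i : ZMod d} (hi : i + i ≠ 0)
    (k : ℕ) : (p : ZMod d) ^ k * i + (p : ZMod d) ^ k * i ≠ 0 := by
  rwa [← mul_add, Ne, ((isUnit_of_pow_three hp3).pow k).mul_right_eq_zero]

lemma orb_eq_image_range_six [NeZero d] (hp3 : (p : ZMod d) ^ 3 = -1) (i : ZMod d) :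
    orb p d i = (range 6).image fun j => (p : ZMod d) ^ j * i := by
  have hp6 := pow_six_eq_one_of_pow_three hp3
  ext x
  simp only [mem_orb_iff (isOfFinOrder_of_pow_three hp3), mem_image, mem_range]
  refine ⟨fun ⟨k, hk⟩ => ⟨k % 6, Nat.mod_lt _ (by norm_num), ?_⟩, fun ⟨k, _, hk⟩ => ⟨k, hk.symm⟩⟩
  rw [hk, ← Nat.div_add_mod k 6, pow_add, pow_mul, hp6, one_pow, one_mul, Nat.div_add_mod]

lemma pow_mul_ne_self (hp3 : (p : ZMod d) ^ 3 = -1) {i : ZMod d} (hi : i + i ≠ 0)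
    (hpi : (p : ZMod d) * i ≠ -i) {t : ℕ} (ht0 : 0 < t) (ht6 : t < 6) :
    (p : ZMod d) ^ t * i ≠ i := by
  intro h
  interval_cases t
  · exact hi (by linear_combination (-((p : ZMod d) ^ 2 + p + 1)) * h + i * hp3)
  · exact hpi (by linear_combination (-(p : ZMod d)) * h + i * hp3)
  · exact hi (by linear_combination -h + i * hp3)
  · exact hpi (by linear_combination -h + (p : ZMod d) * i * hp3)
  -- `p⁵ i = -p² i`, so multiplying by `p` gives `p i = i`, the case `t = 1`
  · exact hi (by linear_combination ((p : ZMod d) ^ 2 + p + 1) * p * h +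
      (1 - ((p : ZMod d) ^ 2 + p + 1) * ((p : ZMod d) ^ 3 - 1)) * i * hp3)

lemma card_orb_of_mul_eq_neg [NeZero d] (hp3 : (p : ZMod d) ^ 3 = -1) {i : ZMod d}
    (hi : i + i ≠ 0) (hpi : (p : ZMod d) * i = -i) : #(orb p d i) = 2 := by
  have hpow : ∀ j, (p : ZMod d) ^ j * i = (-1) ^ j * i := by
    intro j
    induction j with
    | zero => simp
    | succ j ih => rw [pow_succ, mul_assoc, hpi, mul_neg, ih, pow_succ, mul_neg_one, neg_mul]
  have hpair : orb p d i = {i, -i} := by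
    ext x
    simp only [orb_eq_image_range_six hp3, hpow, mem_image, mem_range, mem_insert,
      mem_singleton]
    constructor
    · rintro ⟨j, -, rfl⟩
      rcases neg_one_pow_eq_or (ZMod d) j with h | h <;> simp [h]
    · rintro (rfl | rfl)
      exacts [⟨0, by norm_num⟩, ⟨1, by norm_num⟩]
  rw [hpair, card_pair (fun h => hi (by linear_combination h))]

lemma card_orb_of_mul_ne_neg [NeZero d] (hp3 : (p : ZMod d) ^ 3 = -1) {i : ZMod d}
    (hi : i + i ≠ 0) (hpi : (p : ZMod d) * i ≠ -i) : #(orb p d i) = 6 := by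
  have hne : ∀ a b, a < b → b < 6 → (p : ZMod d) ^ a * i ≠ (p : ZMod d) ^ b * i := by
    intro a b hab hb h
    refine pow_mul_ne_self hp3 hi hpi (t := b - a) (by omega) (by omega) ?_
    apply ((isUnit_of_pow_three hp3).pow a).mul_left_cancel
    rw [← mul_assoc, ← pow_add, Nat.add_sub_cancel' hab.le, h]
  rw [orb_eq_image_range_six hp3, card_image_of_injOn, card_range]
  intro a ha b hb hab
  simp only [coe_range, Set.mem_Iio] at ha hb
  by_contra hab'
  rcases Nat.lt_or_gt_of_ne hab' with h | h
  exacts [hne a b h hb hab, hne b a h ha hab.symm]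

end CubeRootOfMinusOne

section Walk

variable {a : ℕ → ℤ} {b : ℕ → Bool}

def alternatingPatterns : Finset (Bool × Bool × Bool) := {(false, true, false), (true, false, true)}

lemma walk_height_seven (ha0 : a 0 = 0) (ha : ∀ n, a (n + 1) = a n + if b n then -1 else 1)
    (hb : ∀ j, b (j + 3) = !b j) :
    ((range 7).sup' nonempty_range_add_one a - (range 7).inf' nonempty_range_add_one a).toNat =
      if (b 0, b 1, b 2) ∈ alternatingPatterns then 1 else 3 := by
  have h3 : b 3 = !b 0 := hb 0
  have h4 : b 4 = !b 1 := hb 1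
  have h5 : b 5 = !b 2 := hb 2
  simp only [range_add_one, range_zero, insert_empty, sup'_insert, inf'_insert, insert_nonempty,
    singleton_nonempty, sup'_singleton, inf'_singleton]
  simp only [ha, ha0, h3, h4, h5]
  cases b 0 <;> cases b 1 <;> cases b 2 <;> decide

lemma walk_height_three (ha0 : a 0 = 0) (ha : ∀ n, a (n + 1) = a n + if b n then -1 else 1)
    (hb : b 1 = !b 0) :
    ((range 3).sup' nonempty_range_add_one a - (range 3).inf' nonempty_range_add_one a).toNat =
      1 := by
  simp only [range_add_one, range_zero, insert_empty, sup'_insert, inf'_insert, insert_nonempty,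
    singleton_nonempty, sup'_singleton, inf'_singleton]
  simp only [ha, ha0, hb]
  cases b 0 <;> decide

end Walk

section Pattern

variable {d p : ℕ}

def pattern (p : ℕ) (x : ZMod d) : Bool × Bool × Bool :=
  (upperHalf x, upperHalf ((p : ZMod d) * x), upperHalf ((p : ZMod d) ^ 2 * x))

def rotate (t : Bool × Bool × Bool) : Bool × Bool × Bool := (t.2.1, t.2.2, !t.1)

lemma rotate_injective : Function.Injective rotate := by decide

lemma rotate_mem_alternatingPatterns (t : Bool × Bool × Bool) :
    rotate t ∈ alternatingPatterns ↔ t ∈ alternatingPatterns := by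
  revert t; decide

variable [NeZero d]

lemma upperHalf_pow_add_three_mul (hp3 : (p : ZMod d) ^ 3 = -1) {x : ZMod d}
    (hx : x + x ≠ 0) (j : ℕ) :
    upperHalf ((p : ZMod d) ^ (j + 3) * x) = !upperHalf ((p : ZMod d) ^ j * x) := by
  rw [pow_add, hp3, mul_neg_one, neg_mul, upperHalf_neg (pow_mul_add_self_ne_zero hp3 hx j)]

lemma pattern_mul (hp3 : (p : ZMod d) ^ 3 = -1) {x : ZMod d} (hx : x + x ≠ 0) :
    pattern p ((p : ZMod d) * x) = rotate (pattern p x) := by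
  have h2 : (p : ZMod d) * ((p : ZMod d) * x) = (p : ZMod d) ^ 2 * x := by ring
  have h3 : (p : ZMod d) ^ 2 * ((p : ZMod d) * x) = -x := by linear_combination x * hp3
  simp only [pattern, rotate, h2, h3, upperHalf_neg hx]

lemma pattern_pow_mul_mem_alternatingPatterns (hp3 : (p : ZMod d) ^ 3 = -1) {x : ZMod d}
    (hx : x + x ≠ 0) (k : ℕ) :
    pattern p ((p : ZMod d) ^ k * x) ∈ alternatingPatterns ↔ pattern p x ∈ alternatingPatterns := by
  induction k with
  | zero => simp
  | succ k ih =>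
    rw [pow_succ', mul_assoc, pattern_mul hp3 (pow_mul_add_self_ne_zero hp3 hx k),
      rotate_mem_alternatingPatterns, ih]

lemma aseq_succ (hp3 : (p : ZMod d) ^ 3 = -1) {i : ZMod d} (hi : i + i ≠ 0) (n : ℕ) :
    aseq p d i (n + 1) = aseq p d i n + if upperHalf ((p : ZMod d) ^ n * i) then -1 else 1 := by
  have h := upperHalf_neg (pow_mul_add_self_ne_zero hp3 hi n)
  simp only [upperHalf] at h ⊢
  rw [aseq]
  by_cases hc : d < 2 * ((p : ZMod d) ^ n * i).val <;> simp_all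

lemma htElt_eq (hp3 : (p : ZMod d) ^ 3 = -1) {i : ZMod d} (hi : i + i ≠ 0) :
    htElt p d i = if pattern p i ∈ alternatingPatterns then 1 else 3 := by
  by_cases hpi : (p : ZMod d) * i = -i
  · have hp2i : (p : ZMod d) ^ 2 * i = i := by rw [sq, mul_assoc, hpi, mul_neg, hpi, neg_neg]
    have halt : pattern p i ∈ alternatingPatterns := by
      simp only [pattern, hpi, hp2i, upperHalf_neg hi]
      cases upperHalf i <;> decide
    simp only [htElt, card_orb_of_mul_eq_neg hp3 hi hpi, if_pos halt]
    exact walk_height_three (a := aseq p d i) rfl (aseq_succ hp3 hi)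
      (by simp [hpi, upperHalf_neg hi])
  · have h := walk_height_seven (a := aseq p d i) rfl (aseq_succ hp3 hi)
      (upperHalf_pow_add_three_mul hp3 hi)
    simp only [pow_zero, one_mul, pow_one] at h
    simp only [htElt, card_orb_of_mul_ne_neg hp3 hi hpi, pattern]
    exact h

lemma htOrbit_orb (hp3 : (p : ZMod d) ^ 3 = -1) {i : ZMod d} (hi : i + i ≠ 0) :
    htOrbit p d (orb p d i) = htElt p d i := by
  have hconst : ∀ x ∈ orb p d i, htElt p d x = htElt p d i := by
    intro x hx
    obtain ⟨k, rfl⟩ := (mem_orb_iff (isOfFinOrder_of_pow_three hp3)).mp hx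
    simp only [htElt_eq hp3 (pow_mul_add_self_ne_zero hp3 hi k), htElt_eq hp3 hi,
      pattern_pow_mul_mem_alternatingPatterns hp3 hi]
  rw [htOrbit, sup_congr rfl hconst, sup_const ⟨i, mem_orb_self i⟩]

end Pattern

section OrbitSum

variable {d p : ℕ} [NeZero d]

lemma filter_orb_eq (hp3 : (p : ZMod d) ^ 3 = -1) {i : ZMod d} (hi : i + i ≠ 0) :
    {x ∈ nonTwoTorsion d | orb p d x = orb p d i} = orb p d i := by
  ext x
  simp only [mem_filter, mem_nonTwoTorsion]
  constructor
  · rintro ⟨-, hx⟩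
    exact hx ▸ mem_orb_self x
  · intro hx
    obtain ⟨k, rfl⟩ := (mem_orb_iff (isOfFinOrder_of_pow_three hp3)).mp hx
    exact ⟨pow_mul_add_self_ne_zero hp3 hi k, orb_eq_of_mem (isOfFinOrder_of_pow_three hp3) hx⟩

lemma sum_Odp_eq (hp3 : (p : ZMod d) ^ 3 = -1) :
    ∑ o ∈ Odp p d, (#o : ℤ) * ((3 : ℤ) - (htOrbit p d o : ℤ)) =
      2 * #{x ∈ nonTwoTorsion d | pattern p x ∈ alternatingPatterns} := by
  have hS : ({x | x ≠ 0 ∧ x + x ≠ 0} : Finset (ZMod d)) = nonTwoTorsion d :=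
    filter_congr fun x _ => ⟨And.right, fun h => ⟨fun h0 => h (by simp [h0]), h⟩⟩
  rw [Odp, hS, sum_image' (fun i => (3 : ℤ) - htOrbit p d (orb p d i))]
  · calc ∑ i ∈ nonTwoTorsion d, ((3 : ℤ) - htOrbit p d (orb p d i))
        = ∑ i ∈ nonTwoTorsion d, if pattern p i ∈ alternatingPatterns then 2 else 0 := by
          refine sum_congr rfl fun i hi => ?_
          rw [mem_nonTwoTorsion] at hi
          rw [htOrbit_orb hp3 hi, htElt_eq hp3 hi]
          split_ifs <;> norm_num
      _ = _ := by rw [sum_ite, sum_const_zero, add_zero, sum_const, nsmul_eq_mul, mul_comm]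
  · intro i hi
    rw [mem_nonTwoTorsion] at hi
    rw [filter_orb_eq hp3 hi, sum_congr rfl fun j hj =>
      by rw [orb_eq_of_mem (isOfFinOrder_of_pow_three hp3) hj], sum_const, nsmul_eq_mul]

end OrbitSum

section PatternCount

variable {d p : ℕ} [NeZero d]

def patternCount (p d : ℕ) [NeZero d] (t : Bool × Bool × Bool) : ℕ :=
  #{x ∈ nonTwoTorsion d | pattern p x = t}

lemma patternCount_rotate (hp3 : (p : ZMod d) ^ 3 = -1) (t : Bool × Bool × Bool) :
    patternCount p d (rotate t) = patternCount p d t := by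
  have hp6 := pow_six_eq_one_of_pow_three hp3
  symm
  refine card_nbij' (fun x => (p : ZMod d) * x) (fun y => (p : ZMod d) ^ 5 * y) ?_ ?_ ?_ ?_
  · intro x hx
    simp only [coe_filter, mem_nonTwoTorsion] at hx ⊢
    refine ⟨by simpa using pow_mul_add_self_ne_zero hp3 hx.1 1, ?_⟩
    rw [pattern_mul hp3 hx.1, hx.2]
  · intro y hy
    simp only [coe_filter, mem_nonTwoTorsion] at hy ⊢
    refine ⟨pow_mul_add_self_ne_zero hp3 hy.1 5, rotate_injective ?_⟩
    rw [← pattern_mul hp3 (pow_mul_add_self_ne_zero hp3 hy.1 5), ← mul_assoc, ← pow_succ', hp6,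
      one_mul, hy.2]
  · intro x _
    simp only
    linear_combination x * hp6
  · intro y _
    simp only
    linear_combination y * hp6

lemma card_nonTwoTorsion_eq_patternCount (hp3 : (p : ZMod d) ^ 3 = -1) :
    #(nonTwoTorsion d) =
      6 * patternCount p d (false, false, false) + 2 * patternCount p d (false, true, false) := by
  -- the rotation cycles `FFF → FFT → FTT → TTT → TTF → TFF → FFF` and `FTF ↔ TFT`
  have h := patternCount_rotate (p := p) (d := d) hp3
  simp only [rotate, Prod.forall, Bool.forall_bool, Bool.not_false, Bool.not_true] at h
  rw [card_eq_sum_card_fiberwise (f := pattern p) (t := univ) fun _ _ => mem_univ _]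
  change ∑ t, patternCount p d t = _
  simp only [Fintype.sum_prod_type, Fintype.sum_bool]
  omega

lemma card_alternating_eq (hp3 : (p : ZMod d) ^ 3 = -1) :
    #{x ∈ nonTwoTorsion d | pattern p x ∈ alternatingPatterns} =
      2 * patternCount p d (false, true, false) := by
  rw [← sum_card_fiberwise_eq_card_filter, alternatingPatterns, sum_pair (by decide), two_mul]
  exact congrArg (patternCount p d (false, true, false) + ·)
    (patternCount_rotate hp3 (false, true, false))

lemma two_mul_patternCount_eq_card (hp3 : (p : ZMod d) ^ 3 = -1) :
    2 * patternCount p d (false, false, false) =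
      #{x : ZMod d | (0 < x.val ∧ 2 * x.val < d) ∧
        (0 < ((p : ZMod d) * x).val ∧ 2 * ((p : ZMod d) * x).val < d)} := by
  have h : patternCount p d (false, false, true) = patternCount p d (false, false, false) :=
    patternCount_rotate hp3 (false, false, false)
  rw [two_mul]
  nth_rw 2 [← h]
  rw [patternCount, patternCount,
    ← sum_pair (f := fun t => #{x ∈ nonTwoTorsion d | pattern p x = t}) (by decide),
    sum_card_fiberwise_eq_card_filter, nonTwoTorsion, filter_filter]
  refine congrArg card (filter_congr fun x _ => ?_)
  rw [← add_self_ne_zero_and_upperHalf_eq_false_iff, ← add_self_ne_zero_and_upperHalf_eq_false_iff,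
    ← mul_add]
  simp only [ne_eq, (isUnit_of_pow_three hp3).mul_right_eq_zero, pattern, mem_insert,
    mem_singleton, Prod.mk.injEq]
  cases upperHalf x <;> cases upperHalf ((p : ZMod d) * x) <;>
    cases upperHalf ((p : ZMod d) ^ 2 * x) <;> simp

end PatternCount

section LowerPairs

lemma natCast_pow_three_eq_neg_one (p : ℕ) : (p : ZMod (p ^ 3 + 1)) ^ 3 = -1 := by
  have h : ((p ^ 3 + 1 : ℕ) : ZMod (p ^ 3 + 1)) = 0 := ZMod.natCast_self _
  push_cast at h
  linear_combination h

lemma lowerHalf_pair_iff {p t k r : ℕ} (hpt : p = 2 * t + 1) (hr : r < p ^ 2)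
    {x : ZMod (p ^ 3 + 1)} (hxv : x.val = p ^ 2 * k + r) :
    ((0 < x.val ∧ 2 * x.val < p ^ 3 + 1) ∧
      (0 < ((p : ZMod (p ^ 3 + 1)) * x).val ∧ 2 * ((p : ZMod (p ^ 3 + 1)) * x).val < p ^ 3 + 1)) ↔
      k ≤ t ∧ 1 ≤ r ∧ r ≤ 2 * t * (t + 1) := by
  have hv : p ^ 2 * k + r < p ^ 3 + 1 := hxv ▸ x.val_lt
  have hpx : (p : ZMod (p ^ 3 + 1)) * x = ((p * r : ℕ) : ZMod (p ^ 3 + 1)) - k := by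
    rw [← ZMod.natCast_zmod_val x, hxv]
    push_cast
    linear_combination (k : ZMod (p ^ 3 + 1)) * natCast_pow_three_eq_neg_one p
  have hk : k ≤ p ^ 2 * k := Nat.le_mul_of_pos_left k (pow_pos (by omega) 2)
  rw [hxv, hpx]
  rcases Nat.eq_zero_or_pos r with rfl | hr0
  · refine iff_of_false ?_ (by omega)
    rintro ⟨⟨hv0, hv2⟩, -, hneg⟩
    have hk0 : (k : ZMod (p ^ 3 + 1)) ≠ 0 := by
      rw [← ZMod.val_ne_zero, ZMod.val_cast_of_lt (by omega)]
      rintro rfl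
      simp at hv0
    rw [mul_zero, Nat.cast_zero, zero_sub, ZMod.neg_val, if_neg hk0,
      ZMod.val_cast_of_lt (by omega)] at hneg
    omega
  · have hkp : k < p := by nlinarith
    have hkpr : k ≤ p * r := by nlinarith
    have hprd : p * r < p ^ 3 := by nlinarith
    rw [← Nat.cast_sub hkpr, ZMod.val_cast_of_lt (by omega)]
    subst hpt
    zify [hkpr]
    constructor
    · rintro ⟨⟨-, hv2⟩, -, hw2⟩
      have hkt : (k : ℤ) ≤ t := by nlinarith
      exact ⟨hkt, by omega, by nlinarith⟩
    · rintro ⟨hkt, -, hrt⟩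
      exact ⟨⟨by positivity, by nlinarith⟩, by nlinarith, by nlinarith⟩

lemma card_lowerHalf_pairs {p t : ℕ} (hpt : p = 2 * t + 1) :
    #{x : ZMod (p ^ 3 + 1) | (0 < x.val ∧ 2 * x.val < p ^ 3 + 1) ∧
      (0 < ((p : ZMod (p ^ 3 + 1)) * x).val ∧ 2 * ((p : ZMod (p ^ 3 + 1)) * x).val < p ^ 3 + 1)} =
      (t + 1) * (2 * t * (t + 1)) := by
  have hp2 : 0 < p ^ 2 := pow_pos (by omega) 2
  have hbox : #(range (t + 1) ×ˢ Icc 1 (2 * t * (t + 1))) = (t + 1) * (2 * t * (t + 1)) := by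
    simp
  have hbounds : ∀ k r, k < t + 1 → r ≤ 2 * t * (t + 1) →
      r < p ^ 2 ∧ p ^ 2 * k + r < p ^ 3 + 1 := by
    intro k r hk hr
    subst hpt
    constructor <;> nlinarith
  rw [← hbox]
  symm
  refine card_nbij' (fun kr => ((p ^ 2 * kr.1 + kr.2 : ℕ) : ZMod (p ^ 3 + 1)))
    (fun x => (x.val / p ^ 2, x.val % p ^ 2)) ?_ ?_ ?_ ?_
  · rintro ⟨k, r⟩ hkr
    simp only [coe_product, coe_range, coe_Icc, Set.mem_prod, Set.mem_Iio, Set.mem_Icc] at hkr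
    obtain ⟨hr, hv⟩ := hbounds k r hkr.1 hkr.2.2
    simp only [mem_coe, mem_filter, mem_univ, true_and]
    exact (lowerHalf_pair_iff hpt hr (ZMod.val_cast_of_lt hv)).mpr ⟨by omega, hkr.2⟩
  · intro x hx
    simp only [mem_coe, mem_filter, mem_univ, true_and] at hx
    have := (lowerHalf_pair_iff hpt (Nat.mod_lt _ hp2) (Nat.div_add_mod _ _).symm).mp hx
    simp only [coe_product, coe_range, coe_Icc, Set.mem_prod, Set.mem_Iio, Set.mem_Icc]
    exact ⟨by omega, this.2⟩
  · rintro ⟨k, r⟩ hkr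
    simp only [coe_product, coe_range, coe_Icc, Set.mem_prod, Set.mem_Iio, Set.mem_Icc] at hkr
    obtain ⟨hr, hv⟩ := hbounds k r hkr.1 hkr.2.2
    simp only [ZMod.val_cast_of_lt hv, Prod.mk.injEq]
    rw [add_comm, Nat.add_mul_div_left _ _ hp2, Nat.div_eq_of_lt hr, Nat.add_mul_mod_self_left,
      Nat.mod_eq_of_lt hr]
    simp
  · intro x _
    simp only [Nat.div_add_mod, ZMod.natCast_zmod_val]

end LowerPairs

theorem sha_sum_f_three_general (p : ℕ) (hodd : Odd p) :
    ∑ o ∈ Odp p (p ^ 3 + 1),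
        (o.card : ℤ) * ((3 : ℤ) - (htOrbit p (p ^ 3 + 1) o : ℤ))
      = ((p : ℤ) - 1) ^ 3 / 2 := by
  have heven : Even (p ^ 3 + 1) := hodd.pow.add_one
  obtain ⟨t, hpt⟩ := hodd
  have hp3 := natCast_pow_three_eq_neg_one p
  have htotal := card_nonTwoTorsion_eq_patternCount hp3
  rw [card_nonTwoTorsion heven] at htotal
  have hlower := two_mul_patternCount_eq_card hp3
  rw [card_lowerHalf_pairs hpt] at hlower
  rw [sum_Odp_eq hp3, card_alternating_eq hp3]
  subst hpt
  have hcube : (((2 * t + 1 : ℕ) : ℤ) - 1) ^ 3 = 2 * (4 * t ^ 3) := by push_cast; ring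
  have hd : (2 * t + 1) ^ 3 + 1 - 2 = 8 * t ^ 3 + 12 * t ^ 2 + 6 * t := by ring_nf; omega
  rw [hcube, Int.mul_ediv_cancel_left _ two_ne_zero]
  rw [hd] at htotal
  push_cast
  nlinarith

/-- for every odd prime `p`, with `d = p³ + 1`,
`∑_{o ∈ O_{d,p}} |o|·(3 − ht(o)) = (p − 1)³ / 2`. -/
theorem sha_sum_f_three (p : ℕ) (hp : p.Prime) (hodd : Odd p) :
    ∑ o ∈ Odp p (p ^ 3 + 1),
        (o.card : ℤ) * ((3 : ℤ) - (htOrbit p (p ^ 3 + 1) o : ℤ))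
      = ((p : ℤ) - 1) ^ 3 / 2 :=
  sha_sum_f_three_general p hodd
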